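/- Let e : Fin p → X and f : Fin q → X be associated principal bases of nonzero subspaces V and W, let P be the orthogonal projection onto W, and let S, T ⊆ Fin p be distinct subsets with |S| = |T| = r. Set V₁ = span{e i : i ∈ S} and V₂ = span{e i : i ∈ T}. Then: (i) V₁ is partially orthogonal to V₂, i.e., there is a nonzero x ∈ V₁ with ⟪x, y⟫ = 0 for all y ∈ V₂; and (ii) if V₁ is not partially orthogonal to W, then P(V₁) is partially orthogonal to P(V₂). -/

import Mathlib

/-! Pick `i ∈ S \ T`; then `e i ∈ V₁` is orthogonal to `V₂`. Since `e i` is orthogonal to every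
`f k` with `k ≠ i`, its projection `P (e i)` is a multiple of `f i`, hence orthogonal to every
`e j` with `j ≠ i`. As `P` is self-adjoint and idempotent, `⟪P (e i), P v⟫ = ⟪P (e i), v⟫ = 0`
for `v ∈ V₂`, and `P (e i) ≠ 0` because `e i` is not orthogonal to `W`. -/

variable {𝕜 X : Type*} [RCLike 𝕜] [NormedAddCommGroup X] [InnerProductSpace 𝕜 X]
  [FiniteDimensional 𝕜 X]

/-- Orthonormal families `e` spanning `V` and `f` spanning `W` are *associated principal bases*
of `V` and `W`: `⟪e i, f j⟫ = 0` whenever `i ≠ j`, and each `⟪e i, f i⟫` is a nonnegative real. -/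
def IsPrincipalPair {𝕜 X : Type*} [RCLike 𝕜] [NormedAddCommGroup X] [InnerProductSpace 𝕜 X]
    {p q : ℕ} (V W : Submodule 𝕜 X) (e : Fin p → X) (f : Fin q → X) : Prop :=
  Orthonormal 𝕜 e ∧ Submodule.span 𝕜 (Set.range e) = V ∧
  Orthonormal 𝕜 f ∧ Submodule.span 𝕜 (Set.range f) = W ∧
  (∀ (i : Fin p) (j : Fin q), (i : ℕ) ≠ (j : ℕ) → (inner 𝕜 (e i) (f j) : 𝕜) = 0) ∧
  (∀ (i : Fin p) (j : Fin q), (i : ℕ) = (j : ℕ) →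
    ∃ c : ℝ, 0 ≤ c ∧ (inner 𝕜 (e i) (f j) : 𝕜) = (c : 𝕜))

/-- `A` is *partially orthogonal* to `B`: some nonzero `a ∈ A` is orthogonal to all of `B`. -/
def PartiallyOrthogonal {𝕜 X : Type*} [RCLike 𝕜] [NormedAddCommGroup X]
    [InnerProductSpace 𝕜 X] (A B : Submodule 𝕜 X) : Prop :=
  ∃ a ∈ A, a ≠ 0 ∧ ∀ b ∈ B, (inner 𝕜 a b : 𝕜) = 0

section

variable {𝕜 E : Type*} [RCLike 𝕜] [NormedAddCommGroup E] [InnerProductSpace 𝕜 E]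

open Submodule

theorem inner_eq_zero_of_mem_span {x : E} {s : Set E} (h : ∀ y ∈ s, (inner 𝕜 x y : 𝕜) = 0)
    {b : E} (hb : b ∈ span 𝕜 s) : (inner 𝕜 x b : 𝕜) = 0 :=
  mem_orthogonal_singleton_iff_inner_right.mp <|
    span_le.mpr (fun y hy => mem_orthogonal_singleton_iff_inner_right.mpr (h y hy)) hb

theorem Orthonormal.starProjection_eq_sum {ι : Type*} [Fintype ι] {f : ι → E}
    (hf : Orthonormal 𝕜 f) {W : Submodule 𝕜 E} [W.HasOrthogonalProjection]
    (hW : span 𝕜 (Set.range f) = W) (x : E) :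
    W.starProjection x = ∑ j, (inner 𝕜 (f j) x : 𝕜) • f j := by
  refine eq_starProjection_of_mem_of_inner_eq_zero
    (hW ▸ sum_mem fun j _ => smul_mem _ _ (subset_span ⟨j, rfl⟩)) fun w hw => ?_
  refine inner_eq_zero_of_mem_span ?_ (hW ▸ hw : w ∈ span 𝕜 (Set.range f))
  rintro _ ⟨k, rfl⟩
  rw [inner_sub_left, hf.inner_left_fintype, inner_conj_symm, sub_self]

theorem IsPrincipalPair.inner_starProjection_eq_zero {p q : ℕ} {V W : Submodule 𝕜 E}
    [W.HasOrthogonalProjection] {e : Fin p → E} {f : Fin q → E} (hef : IsPrincipalPair V W e f)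
    {i j : Fin p} (hij : i ≠ j) : (inner 𝕜 (W.starProjection (e i)) (e j) : 𝕜) = 0 := by
  obtain ⟨-, -, hf, hfW, hzero, -⟩ := hef
  rw [hf.starProjection_eq_sum hfW, sum_inner]
  refine Finset.sum_eq_zero fun k _ => ?_
  rw [inner_smul_left]
  by_cases hki : (i : ℕ) = k
  · rw [← inner_conj_symm (f k) (e j), hzero j k (by omega), map_zero, mul_zero]
  · rw [← inner_conj_symm (f k) (e i), hzero i k hki, map_zero, map_zero, zero_mul]

theorem partiallyOrthogonal_map_starProjection {K A B : Submodule 𝕜 E}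
    [K.HasOrthogonalProjection] {x : E} (hxA : x ∈ A) (hxK : x ∉ Kᗮ)
    (hxB : ∀ b ∈ B, (inner 𝕜 (K.starProjection x) b : 𝕜) = 0) :
    PartiallyOrthogonal (A.map (K.subtype ∘ₗ K.orthogonalProjectionOnto.toLinearMap))
      (B.map (K.subtype ∘ₗ K.orthogonalProjectionOnto.toLinearMap)) := by
  refine ⟨K.starProjection x, ⟨x, hxA, rfl⟩,
    fun h => hxK ((starProjection_apply_eq_zero_iff K).mp h), ?_⟩
  rintro _ ⟨b, hb, rfl⟩
  change (inner 𝕜 (K.starProjection x) (K.starProjection b) : 𝕜) = 0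
  rw [← inner_starProjection_left_eq_right,
    starProjection_eq_self_iff.mpr (K.starProjection_apply_mem x), hxB b hb]

end

theorem coprincipal_partially_orthogonal_general {p q r : ℕ} (V W : Submodule 𝕜 X)
    (e : Fin p → X) (f : Fin q → X) (hef : IsPrincipalPair V W e f)
    (S T : Finset (Fin p)) (hST : S ≠ T) (hS : S.card = r) (hT : T.card = r) :
    PartiallyOrthogonal (Submodule.span 𝕜 (e '' ↑S)) (Submodule.span 𝕜 (e '' ↑T)) ∧
    (¬ PartiallyOrthogonal (Submodule.span 𝕜 (e '' ↑S)) W →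
      PartiallyOrthogonal
        (Submodule.map (W.subtype ∘ₗ (W.orthogonalProjectionOnto).toLinearMap)
          (Submodule.span 𝕜 (e '' ↑S)))
        (Submodule.map (W.subtype ∘ₗ (W.orthogonalProjectionOnto).toLinearMap)
          (Submodule.span 𝕜 (e '' ↑T)))) := by
  obtain ⟨i, hiS, hiT⟩ : ∃ i ∈ S, i ∉ T := Finset.not_subset.mp fun h =>
    hST (Finset.eq_of_subset_of_card_le h (hT.trans hS.symm).le)
  have hei : e i ∈ Submodule.span 𝕜 (e '' ↑S) := Submodule.subset_span ⟨i, hiS, rfl⟩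
  have hne : ∀ j ∈ T, i ≠ j := fun j hj h => hiT (h ▸ hj)
  refine ⟨⟨e i, hei, hef.1.ne_zero i, fun b hb => inner_eq_zero_of_mem_span ?_ hb⟩, fun h => ?_⟩
  · rintro _ ⟨j, hj, rfl⟩
    exact hef.1.inner_eq_zero (hne j hj)
  refine partiallyOrthogonal_map_starProjection hei
    (fun hperp => h ⟨e i, hei, hef.1.ne_zero i, (W.mem_orthogonal' _).mp hperp⟩)
    fun b hb => inner_eq_zero_of_mem_span ?_ hb
  rintro _ ⟨j, hj, rfl⟩
  exact hef.inner_starProjection_eq_zero (hne j hj)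

/-- Let `e, f` be associated principal bases of nonzero subspaces `V, W`, `P`
the orthogonal projection onto `W`, and `S ≠ T` subsets of `Fin p` with `|S| = |T| = r`, spanning
coprincipal subspaces `V₁ = span {e i : i ∈ S}`, `V₂ = span {e i : i ∈ T}`.  Then (i) `V₁` is
partially orthogonal to `V₂`, and (ii) if `V₁` is not partially orthogonal to `W`, then `P(V₁)`
is partially orthogonal to `P(V₂)`. -/
theorem coprincipal_partially_orthogonal {p q r : ℕ} (V W : Submodule 𝕜 X)
    (hV : V ≠ ⊥) (hW : W ≠ ⊥)
    (e : Fin p → X) (f : Fin q → X) (hef : IsPrincipalPair V W e f)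
    (S T : Finset (Fin p)) (hST : S ≠ T) (hS : S.card = r) (hT : T.card = r) :
    PartiallyOrthogonal (Submodule.span 𝕜 (e '' ↑S)) (Submodule.span 𝕜 (e '' ↑T)) ∧
    (¬ PartiallyOrthogonal (Submodule.span 𝕜 (e '' ↑S)) W →
      PartiallyOrthogonal
        (Submodule.map (W.subtype ∘ₗ (W.orthogonalProjectionOnto).toLinearMap)
          (Submodule.span 𝕜 (e '' ↑S)))
        (Submodule.map (W.subtype ∘ₗ (W.orthogonalProjectionOnto).toLinearMap)
          (Submodule.span 𝕜 (e '' ↑T)))) :=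
  coprincipal_partially_orthogonal_general V W e f hef S T hST hS hT
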